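/- Under the assumptions of the approximate calibration decomposition, if sup_{s∈S} |m(g(s),1) − m(g(s),0)| ≤ 1, then the absolute error of the label-free performance estimate is bounded by the expected absolute calibration error: |E[m(g(f(x)), y)] − Σ_{s∈S} P[f(x)=s]·(c(s)·m(g(s),1) + (1−c(s))·m(g(s),0))| ≤ Σ_{s∈S} P[f(x)=s]·|ε_s|. -/

import Mathlib

/-!
Conditioning on the score cell `{f x = s}`, the mass of positive labels there is
`P[f x = s] (c s + ε s)`, so the expected metric and the label-free estimate differ on that cell by
exactly `P[f x = s] ε s (m (g s) 1 - m (g s) 0)`. The bound on the metric difference and the triangle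
inequality over the finitely many cells give the claim.
-/

open MeasureTheory

lemma integral_comp_eq_sum_measureReal_preimage {α β : Type*} [MeasurableSpace α]
    [MeasurableSpace β] [Fintype β] [MeasurableSingletonClass β] (μ : Measure α)
    [IsFiniteMeasure μ] {T : α → β} (hT : Measurable T) (φ : β → ℝ) :
    ∫ a, φ (T a) ∂μ = ∑ b, μ.real (T ⁻¹' {b}) * φ b := by
  rw [← integral_map hT.aemeasurable (measurable_of_countable φ).aestronglyMeasurable,
    integral_fintype .of_finite]
  simp only [map_measureReal_apply hT (measurableSet_singleton _), smul_eq_mul]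

lemma measureReal_eq_mul_of_div_eq {α : Type*} [MeasurableSpace α] (μ : Measure α)
    [IsFiniteMeasure μ] {A B : Set α} (hAB : A ⊆ B) {r : ℝ}
    (h : μ B ≠ 0 → μ.real A / μ.real B = r) :
    μ.real A = μ.real B * r := by
  by_cases hB : μ B = 0
  · simp [measureReal_def, hB, measure_mono_null hAB hB]
  · rw [← h hB, mul_div_cancel₀]
    exact (measureReal_ne_zero_iff).2 hB

lemma abs_mix_sub_mix_le {w a₁ a₀ c ε u v : ℝ} (hw : 0 ≤ w) (hsplit : w = a₁ + a₀)
    (ha₁ : a₁ = w * (c + ε)) (huv : |u - v| ≤ 1) :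
    |a₁ * u + a₀ * v - w * (c * u + (1 - c) * v)| ≤ w * |ε| := by
  have hdiff : a₁ * u + a₀ * v - w * (c * u + (1 - c) * v) = w * ε * (u - v) := by
    rw [show a₀ = w - a₁ by linarith, ha₁]; ring
  rw [hdiff, abs_mul, abs_mul, abs_of_nonneg hw]
  exact mul_le_of_le_one_right (by positivity) huv

section ScoreCells

variable {X S : Type*} [MeasurableSpace X] (μ : Measure (X × Bool)) [IsFiniteMeasure μ]
  {f : X → S}

lemma integral_score_label_eq_sum [MeasurableSpace S] [MeasurableSingletonClass S] [Fintype S]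
    (hf : Measurable f) (φ : S → Bool → ℝ) :
    ∫ p, φ (f p.1) p.2 ∂μ = ∑ s, (μ.real {p | p.2 = true ∧ f p.1 = s} * φ s true
      + μ.real {p | p.2 = false ∧ f p.1 = s} * φ s false) := by
  have hT : Measurable fun p : X × Bool => (f p.1, p.2) :=
    (hf.comp measurable_fst).prodMk measurable_snd
  rw [integral_comp_eq_sum_measureReal_preimage μ hT fun q => φ q.1 q.2,
    Fintype.sum_prod_type]
  refine Finset.sum_congr rfl fun s _ => ?_
  rw [Fintype.sum_bool]
  congr 3 <;> ext p <;> simp [Prod.ext_iff, and_comm]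

lemma measureReal_score_eq_add (s : S) :
    μ.real {p | f p.1 = s} = μ.real {p | p.2 = true ∧ f p.1 = s}
      + μ.real {p | p.2 = false ∧ f p.1 = s} := by
  rw [← measureReal_inter_add_sdiff (t := {p : X × Bool | p.2 = true})
    (measurable_snd (measurableSet_singleton true))]
  congr 2 <;> ext p <;> simp [and_comm]

end ScoreCells

theorem pape_estimation_error_bound_general
    {X S : Type*} [MeasurableSpace X] [Fintype S]
    [MeasurableSpace S] [MeasurableSingletonClass S]
    (μ : Measure (X × Bool)) [IsProbabilityMeasure μ]
    (f : X → S) (hf : Measurable f)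
    (g : S → Bool) (c : S → ℝ) (ε : S → ℝ) (m : Bool → Bool → ℝ)
    (hcal : ∀ s, μ {p | f p.1 = s} ≠ 0 →
      (μ {p | p.2 = true ∧ f p.1 = s}).toReal / (μ {p | f p.1 = s}).toReal
        = c s + ε s)
    (hm : ∀ s, |m (g s) true - m (g s) false| ≤ 1) :
    |(∫ p, m (g (f p.1)) p.2 ∂μ)
        - ∑ s, (μ {p | f p.1 = s}).toReal *
            (c s * m (g s) true + (1 - c s) * m (g s) false)|
      ≤ ∑ s, (μ {p | f p.1 = s}).toReal * |ε s| := by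
  rw [integral_score_label_eq_sum μ hf fun s b => m (g s) b, ← Finset.sum_sub_distrib]
  refine (Finset.abs_sum_le_sum_abs _ _).trans (Finset.sum_le_sum fun s _ => ?_)
  exact abs_mix_sub_mix_le measureReal_nonneg (measureReal_score_eq_add μ s)
    (measureReal_eq_mul_of_div_eq μ (fun _ hp => hp.2) (hcal s)) (hm s)

theorem pape_estimation_error_bound
    {X S : Type*} [MeasurableSpace X] [Fintype S]
    [MeasurableSpace S] [MeasurableSingletonClass S]
    (μ : Measure (X × Bool)) [IsProbabilityMeasure μ]
    (f : X → S) (hf : Measurable f)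
    (g : S → Bool) (c : S → ℝ) (ε : S → ℝ) (m : Bool → Bool → ℝ)
    (hc01 : ∀ s, c s ∈ Set.Icc (0 : ℝ) 1)
    (hcal : ∀ s, μ {p | f p.1 = s} ≠ 0 →
      (μ {p | p.2 = true ∧ f p.1 = s}).toReal / (μ {p | f p.1 = s}).toReal
        = c s + ε s)
    (hm : ∀ s, |m (g s) true - m (g s) false| ≤ 1) :
    |(∫ p, m (g (f p.1)) p.2 ∂μ)
        - ∑ s, (μ {p | f p.1 = s}).toReal *
            (c s * m (g s) true + (1 - c s) * m (g s) false)|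
      ≤ ∑ s, (μ {p | f p.1 = s}).toReal * |ε s| :=
  pape_estimation_error_bound_general μ f hf g c ε m hcal hm
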